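/- If λ₀ ∈ ℝ satisfies ξ(λ₀) = 0 and λ₁ ∈ ℂ satisfies ξ(λ₁) = 0, then Re(λ₁) ≤ λ₀. That is, every complex zero of the characteristic function has real part at most the unique real zero. -/

import Mathlib

/-! For real `c` the integrand of `ξ(c)` is real: `ξ(c) = xiR c - 1` with
`xiR c = ∫ q/g · exp (-∫ (c + w)/g)`. Since `q ≥ 0` has positive mass and the weight
`exp (-∫_{x₀}^x (c + w)/g)` strictly decreases in `c` for every `x > x₀`, `xiR` is strictly
decreasing. For a complex zero `λ₁`, `|exp z| = exp (Re z)` and the triangle inequality give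
`1 ≤ xiR (Re λ₁)`, whereas `xiR λ₀ = 1`; hence `Re λ₁ ≤ λ₀`. -/

open MeasureTheory Set

/-- The characteristic function for complex `λ`. -/
noncomputable def xiC (x₀ x₁ : ℝ) (g w q : ℝ → ℝ) (l : ℂ) : ℂ :=
  (∫ x in x₀..x₁, ((q x / g x : ℝ) : ℂ) *
      Complex.exp (-∫ s in x₀..x, (l + (w s : ℂ)) / (g s : ℂ))) - 1

open scoped Interval

noncomputable def weightExp (x₀ : ℝ) (g w : ℝ → ℝ) (c x : ℝ) : ℝ :=
  Real.exp (-∫ s in x₀..x, (c + w s) / g s)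

noncomputable def xiR (x₀ x₁ : ℝ) (g w q : ℝ → ℝ) (c : ℝ) : ℝ :=
  ∫ x in x₀..x₁, q x / g x * weightExp x₀ g w c x

theorem norm_cexp_neg_intervalIntegral {f : ℝ → ℂ} {a b : ℝ}
    (hf : IntervalIntegrable f volume a b) :
    ‖Complex.exp (-∫ x in a..b, f x)‖ = Real.exp (-∫ x in a..b, (f x).re) := by
  rw [Complex.norm_exp, Complex.neg_re]
  exact congrArg (fun t => Real.exp (-t)) (intervalIntegral.intervalIntegral_re hf).symm

theorem intervalIntegral_mul_pos_of_pos_on {a b : ℝ} {q h : ℝ → ℝ}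
    (hq0 : ∀ᵐ x ∂volume.restrict (Ι a b), 0 ≤ q x) (hqpos : 0 < ∫ x in a..b, q x)
    (hh : ContinuousOn h (uIcc a b)) (hpos : ∀ x ∈ Ι a b, 0 < h x) :
    0 < ∫ x in a..b, q x * h x := by
  have hq := intervalIntegral.intervalIntegrable_of_integral_ne_zero hqpos.ne'
  have hqh0 : ∀ᵐ x ∂volume.restrict (Ι a b), 0 ≤ q x * h x := by
    filter_upwards [hq0, ae_restrict_mem measurableSet_uIoc] with x hqx hx
    exact mul_nonneg hqx (hpos x hx).le
  rw [intervalIntegral.integral_pos_iff_support_of_nonneg_ae' hq0 hq] at hqpos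
  obtain ⟨hab, hsupp⟩ := hqpos
  rw [intervalIntegral.integral_pos_iff_support_of_nonneg_ae' hqh0 (hq.mul_continuousOn hh)]
  refine ⟨hab, hsupp.trans_le (measure_mono ?_)⟩
  rintro x ⟨hqx, hx⟩
  exact ⟨mul_ne_zero hqx (hpos x (by rwa [uIoc_of_le hab.le])).ne', hx⟩

section

variable {x₀ x₁ : ℝ} {g w q : ℝ → ℝ}

theorem xiC_ofReal (c : ℝ) : xiC x₀ x₁ g w q c = xiR x₀ x₁ g w q c - 1 := by
  have hinner : ∀ x, ∫ s in x₀..x, ((c : ℂ) + (w s : ℂ)) / (g s : ℂ) =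
      ((∫ s in x₀..x, (c + w s) / g s : ℝ) : ℂ) := by
    intro x
    rw [← intervalIntegral.integral_ofReal]
    push_cast
    rfl
  simp_rw [xiC, hinner, ← Complex.ofReal_neg, ← Complex.ofReal_exp, ← Complex.ofReal_mul,
    intervalIntegral.integral_ofReal]
  rfl

theorem continuousOn_weightExp (hx : x₀ ≤ x₁) (hg : ContinuousOn g (Icc x₀ x₁))
    (hg0 : ∀ x ∈ Icc x₀ x₁, g x ≠ 0) (hw : ContinuousOn w (Icc x₀ x₁)) (c : ℝ) :
    ContinuousOn (weightExp x₀ g w c) (Icc x₀ x₁) := by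
  have hint : IntervalIntegrable (fun s => (c + w s) / g s) volume x₀ x₁ :=
    ((continuousOn_const.add hw).div hg hg0).intervalIntegrable_of_Icc hx
  have := intervalIntegral.continuousOn_primitive_interval' hint left_mem_uIcc
  rw [uIcc_of_le hx] at this
  exact this.neg.rexp

theorem weightExp_lt_weightExp (hg : ContinuousOn g (Icc x₀ x₁))
    (hgpos : ∀ x ∈ Icc x₀ x₁, 0 < g x) (hw : ContinuousOn w (Icc x₀ x₁)) {c d x : ℝ}
    (hcd : c < d) (hx : x ∈ Ioc x₀ x₁) :
    weightExp x₀ g w d x < weightExp x₀ g w c x := by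
  have hsub : Icc x₀ x ⊆ Icc x₀ x₁ := Icc_subset_Icc_right hx.2
  have hcont : ∀ e : ℝ, ContinuousOn (fun s => (e + w s) / g s) (Icc x₀ x) := fun e =>
    ((continuousOn_const.add hw).div hg fun s hs => (hgpos s hs).ne').mono hsub
  have hlt : ∀ s ∈ Icc x₀ x, (c + w s) / g s < (d + w s) / g s := fun s hs =>
    div_lt_div_of_pos_right (by linarith) (hgpos s (hsub hs))
  refine Real.exp_lt_exp.2 (neg_lt_neg ?_)
  exact intervalIntegral.integral_lt_integral_of_continuousOn_of_le_of_exists_lt hx.1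
    (hcont c) (hcont d) (fun s hs => (hlt s (Ioc_subset_Icc_self hs)).le)
    ⟨x, right_mem_Icc.2 hx.1.le, hlt x (right_mem_Icc.2 hx.1.le)⟩

theorem norm_cexp_neg_integral_eq_weightExp (hg : ContinuousOn g (Icc x₀ x₁))
    (hg0 : ∀ x ∈ Icc x₀ x₁, g x ≠ 0) (hw : ContinuousOn w (Icc x₀ x₁)) (l : ℂ) {x : ℝ}
    (hx : x ∈ Icc x₀ x₁) :
    ‖Complex.exp (-∫ s in x₀..x, (l + (w s : ℂ)) / (g s : ℂ))‖ = weightExp x₀ g w l.re x := by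
  have hcont : ContinuousOn (fun s => (l + (w s : ℂ)) / (g s : ℂ)) (Icc x₀ x) :=
    ((continuousOn_const.add (Complex.continuous_ofReal.comp_continuousOn hw)).div
      (Complex.continuous_ofReal.comp_continuousOn hg)
      fun s hs => Complex.ofReal_ne_zero.2 (hg0 s hs)).mono (Icc_subset_Icc_right hx.2)
  rw [norm_cexp_neg_intervalIntegral (hcont.intervalIntegrable_of_Icc hx.1), weightExp]
  simp only [Complex.div_ofReal_re, Complex.add_re, Complex.ofReal_re]

theorem intervalIntegrable_xiR_integrand (hx : x₀ ≤ x₁) (hg : ContinuousOn g (Icc x₀ x₁))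
    (hg0 : ∀ x ∈ Icc x₀ x₁, g x ≠ 0) (hw : ContinuousOn w (Icc x₀ x₁))
    (hq : IntervalIntegrable q volume x₀ x₁) (c : ℝ) :
    IntervalIntegrable (fun x => q x / g x * weightExp x₀ g w c x) volume x₀ x₁ := by
  have hcont : ContinuousOn (fun x => weightExp x₀ g w c x / g x) (uIcc x₀ x₁) := by
    rw [uIcc_of_le hx]
    exact (continuousOn_weightExp hx hg hg0 hw c).div hg hg0
  simpa only [mul_div_assoc', div_mul_eq_mul_div] using hq.mul_continuousOn hcont

theorem one_le_xiR_re_of_xiC_eq_zero (hx : x₀ ≤ x₁) (hg : ContinuousOn g (Icc x₀ x₁))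
    (hgpos : ∀ x ∈ Icc x₀ x₁, 0 < g x) (hw : ContinuousOn w (Icc x₀ x₁))
    (hq : IntervalIntegrable q volume x₀ x₁) (hq0 : ∀ᵐ x ∂volume.restrict (Ι x₀ x₁), 0 ≤ q x)
    {l : ℂ} (hl : xiC x₀ x₁ g w q l = 0) :
    1 ≤ xiR x₀ x₁ g w q l.re := by
  have hg0 : ∀ x ∈ Icc x₀ x₁, g x ≠ 0 := fun x hx => (hgpos x hx).ne'
  rw [xiC, sub_eq_zero] at hl
  calc (1 : ℝ) = ‖(1 : ℂ)‖ := norm_one.symm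
    _ = _ := by rw [← hl]
    _ ≤ xiR x₀ x₁ g w q l.re := by
      refine intervalIntegral.norm_integral_le_of_norm_le hx ?_
        (intervalIntegrable_xiR_integrand hx hg hg0 hw hq l.re)
      rw [uIoc_of_le hx] at hq0
      filter_upwards [(ae_restrict_iff' measurableSet_Ioc).1 hq0] with t hqt ht
      have ht' := Ioc_subset_Icc_self ht
      rw [norm_mul, norm_cexp_neg_integral_eq_weightExp hg hg0 hw l ht', Complex.norm_real,
        Real.norm_of_nonneg (div_nonneg (hqt ht) (hgpos t ht').le)]

theorem xiR_strictAnti (hx : x₀ ≤ x₁) (hg : ContinuousOn g (Icc x₀ x₁))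
    (hgpos : ∀ x ∈ Icc x₀ x₁, 0 < g x) (hw : ContinuousOn w (Icc x₀ x₁))
    (hq0 : ∀ᵐ x ∂volume.restrict (Ι x₀ x₁), 0 ≤ q x) (hqpos : 0 < ∫ x in x₀..x₁, q x) :
    StrictAnti (xiR x₀ x₁ g w q) := by
  have hg0 : ∀ x ∈ Icc x₀ x₁, g x ≠ 0 := fun x hx => (hgpos x hx).ne'
  have hq := intervalIntegral.intervalIntegrable_of_integral_ne_zero hqpos.ne'
  intro c d hcd
  have hdiff : xiR x₀ x₁ g w q c - xiR x₀ x₁ g w q d =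
      ∫ x in x₀..x₁, q x * ((weightExp x₀ g w c x - weightExp x₀ g w d x) / g x) := by
    rw [xiR, xiR, ← intervalIntegral.integral_sub
      (intervalIntegrable_xiR_integrand hx hg hg0 hw hq c)
      (intervalIntegrable_xiR_integrand hx hg hg0 hw hq d)]
    congr 1 with x
    ring
  have hcont : ContinuousOn (fun x => (weightExp x₀ g w c x - weightExp x₀ g w d x) / g x)
      (uIcc x₀ x₁) := by
    rw [uIcc_of_le hx]
    exact ((continuousOn_weightExp hx hg hg0 hw c).sub
      (continuousOn_weightExp hx hg hg0 hw d)).div hg hg0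
  have hgap : ∀ x ∈ Ι x₀ x₁, 0 < (weightExp x₀ g w c x - weightExp x₀ g w d x) / g x := by
    intro x hx'
    rw [uIoc_of_le hx] at hx'
    exact div_pos (sub_pos.2 (weightExp_lt_weightExp hg hgpos hw hcd hx'))
      (hgpos x (Ioc_subset_Icc_self hx'))
  linarith [intervalIntegral_mul_pos_of_pos_on hq0 hqpos hcont hgap]

end

theorem stmt_13_general (x₀ x₁ : ℝ) (hx : x₀ < x₁)
    (g w q : ℝ → ℝ)
    (hg : ContDiffOn ℝ 1 g (Icc x₀ x₁)) (hgpos : ∀ x ∈ Icc x₀ x₁, 0 < g x)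
    (hw : ContinuousOn w (Icc x₀ x₁))
    (hq0 : ∀ᵐ x ∂(volume.restrict (Icc x₀ x₁)), 0 ≤ q x)
    (hqpos : 0 < ∫ x in x₀..x₁, q x)
    (l₀ : ℝ) (hroot : xiC x₀ x₁ g w q (l₀ : ℂ) = 0)
    (l₁ : ℂ) (hroot₁ : xiC x₀ x₁ g w q l₁ = 0) :
    l₁.re ≤ l₀ := by
  have hq := intervalIntegral.intervalIntegrable_of_integral_ne_zero hqpos.ne'
  have hq0' : ∀ᵐ x ∂volume.restrict (Ι x₀ x₁), 0 ≤ q x := by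
    rw [uIoc_of_le hx.le]
    exact ae_restrict_of_ae_restrict_of_subset Ioc_subset_Icc_self hq0
  have h₀ : xiR x₀ x₁ g w q l₀ = 1 := by
    rw [xiC_ofReal, sub_eq_zero] at hroot
    exact_mod_cast hroot
  have h₁ : 1 ≤ xiR x₀ x₁ g w q l₁.re :=
    one_le_xiR_re_of_xiC_eq_zero hx.le hg.continuousOn hgpos hw hq hq0' hroot₁
  exact (xiR_strictAnti hx.le hg.continuousOn hgpos hw hq0' hqpos).le_iff_ge.1 (h₀ ▸ h₁)

/-- Every complex zero of `ξ` has real part at most the unique real zero `λ₀`. -/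
theorem stmt_13 (x₀ x₁ Mq : ℝ) (hx₀ : 0 < x₀) (hx : x₀ < x₁)
    (g w q : ℝ → ℝ)
    (hg : ContDiffOn ℝ 1 g (Icc x₀ x₁)) (hgpos : ∀ x ∈ Icc x₀ x₁, 0 < g x)
    (hw : ContinuousOn w (Icc x₀ x₁)) (hw0 : ∀ x ∈ Icc x₀ x₁, 0 ≤ w x)
    (hqm : Measurable q) (hqb : ∀ x ∈ Icc x₀ x₁, |q x| ≤ Mq)
    (hq0 : ∀ᵐ x ∂(volume.restrict (Icc x₀ x₁)), 0 ≤ q x)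
    (hqpos : 0 < ∫ x in x₀..x₁, q x)
    (l₀ : ℝ) (hroot : xiC x₀ x₁ g w q (l₀ : ℂ) = 0)
    (l₁ : ℂ) (hroot₁ : xiC x₀ x₁ g w q l₁ = 0) :
    l₁.re ≤ l₀ :=
  stmt_13_general x₀ x₁ hx g w q hg hgpos hw hq0 hqpos l₀ hroot l₁ hroot₁
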